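/- arXiv:2309.11051 — 4 statements merged into one kernel-verified Lean document; each statement's English description precedes it below -/
import Mathlib

section
/- Let R = (X⊗X+Y⊗Y)/2 and R_Heis = (X⊗X+Y⊗Y+Z⊗Z)/2. Then for every real α, (Z⊗I) exp(−iα R_Heis) (Z⊗I) exp(iα R_Heis) = exp(2iα R). -/
/-! Write `R_Heis = R + S` with `S = (Z⊗Z)/2` (`Rzz` below). Conjugation by the involution
`Z⊗I` negates `R` and fixes `S`, so it turns `exp(−iα R_Heis)` into `exp(iα (R − S))`; since `R`
and `S` commute, the product with `exp(iα (R + S))` is `exp(2iα R)`. -/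

open Matrix
open scoped Kronecker

noncomputable section

/-- Matrix exponential, defined by its power series. -/
def mexp {m : Type*} [Fintype m] [DecidableEq m] (A : Matrix m m ℂ) : Matrix m m ℂ :=
  ∑' k : ℕ, ((k.factorial : ℂ)⁻¹) • A ^ k

/-- Pauli X. -/
def PX : Matrix (Fin 2) (Fin 2) ℂ := !![0, 1; 1, 0]
/-- Pauli Y. -/
def PY : Matrix (Fin 2) (Fin 2) ℂ := !![0, -Complex.I; Complex.I, 0]
/-- Pauli Z. -/
def PZ : Matrix (Fin 2) (Fin 2) ℂ := !![1, 0; 0, -1]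

/-- The XY interaction `R = (X⊗X + Y⊗Y)/2`. -/
def Rxy : Matrix (Fin 2 × Fin 2) (Fin 2 × Fin 2) ℂ :=
  (2 : ℂ)⁻¹ • (PX ⊗ₖ PX + PY ⊗ₖ PY)

/-- The Heisenberg interaction `R_Heis = (X⊗X + Y⊗Y + Z⊗Z)/2`. -/
def RHeis : Matrix (Fin 2 × Fin 2) (Fin 2 × Fin 2) ℂ :=
  (2 : ℂ)⁻¹ • (PX ⊗ₖ PX + PY ⊗ₖ PY + PZ ⊗ₖ PZ)

theorem mexp_eq_exp {m : Type*} [Fintype m] [DecidableEq m] (A : Matrix m m ℂ) :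
    mexp A = NormedSpace.exp A := by
  rw [NormedSpace.exp_eq_tsum ℂ]
  rfl

namespace Matrix

theorem neg_kronecker {l m n p α : Type*} [Mul α] [HasDistribNeg α] (A : Matrix l m α)
    (B : Matrix n p α) : (-A) ⊗ₖ B = -(A ⊗ₖ B) := by
  ext
  simp [neg_mul]

theorem kronecker_neg {l m n p α : Type*} [Mul α] [HasDistribNeg α] (A : Matrix l m α)
    (B : Matrix n p α) : A ⊗ₖ (-B) = -(A ⊗ₖ B) := by
  ext
  simp [mul_neg]

section Exp

variable {m 𝔸 : Type*} [Fintype m] [DecidableEq m] [NormedRing 𝔸] [NormedAlgebra ℚ 𝔸]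
  [CompleteSpace 𝔸]

theorem exp_conj_of_mul_self_eq_one {U : Matrix m m 𝔸} (hU : U * U = 1) (A : Matrix m m 𝔸) :
    NormedSpace.exp (U * A * U) = U * NormedSpace.exp A * U :=
  exp_units_conj ⟨U, U, hU, hU⟩ A

theorem conj_exp_neg_mul_exp_eq_exp_add_self {U R S : Matrix m m 𝔸} (hU : U * U = 1)
    (hR : U * R * U = -R) (hS : U * S * U = S) (hRS : Commute R S) :
    U * NormedSpace.exp (-(R + S)) * U * NormedSpace.exp (R + S) = NormedSpace.exp (R + R) := by
  have hconj : U * (-(R + S)) * U = R - S := by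
    rw [mul_neg, neg_mul, mul_add, add_mul, hR, hS]
    abel
  have hcomm : Commute (R - S) (R + S) :=
    ((Commute.refl R).add_right hRS).sub_left (hRS.symm.add_right (Commute.refl S))
  rw [← exp_conj_of_mul_self_eq_one hU, hconj, ← exp_add_of_commute _ _ hcomm]
  congr 1
  abel

end Exp

end Matrix

def Rzz : Matrix (Fin 2 × Fin 2) (Fin 2 × Fin 2) ℂ := (2 : ℂ)⁻¹ • (PZ ⊗ₖ PZ)

theorem RHeis_eq_Rxy_add_Rzz : RHeis = Rxy + Rzz := by
  rw [RHeis, Rxy, Rzz, ← smul_add]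

theorem PZ_mul_PZ : PZ * PZ = 1 := by
  rw [PZ, mul_fin_two, one_fin_two]; norm_num

theorem PZ_mul_PX : PZ * PX = -(PX * PZ) := by
  rw [PZ, PX, mul_fin_two, mul_fin_two]; norm_num

theorem PZ_mul_PY : PZ * PY = -(PY * PZ) := by
  rw [PZ, PY, mul_fin_two, mul_fin_two]; norm_num

theorem commute_Rxy_Rzz : Commute Rxy Rzz := by
  have hX : Commute (PX ⊗ₖ PX) (PZ ⊗ₖ PZ) := by
    rw [Commute, SemiconjBy, ← mul_kronecker_mul, ← mul_kronecker_mul, PZ_mul_PX,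
      neg_kronecker, kronecker_neg, neg_neg]
  have hY : Commute (PY ⊗ₖ PY) (PZ ⊗ₖ PZ) := by
    rw [Commute, SemiconjBy, ← mul_kronecker_mul, ← mul_kronecker_mul, PZ_mul_PY,
      neg_kronecker, kronecker_neg, neg_neg]
  exact ((hX.add_left hY).smul_left _).smul_right _

theorem ZI_mul_ZI : (PZ ⊗ₖ (1 : Matrix (Fin 2) (Fin 2) ℂ)) * (PZ ⊗ₖ 1) = 1 := by
  rw [← mul_kronecker_mul, PZ_mul_PZ, one_mul, one_kronecker_one]

theorem ZI_conj_kronecker (A B : Matrix (Fin 2) (Fin 2) ℂ) :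
    (PZ ⊗ₖ 1) * (A ⊗ₖ B) * (PZ ⊗ₖ 1) = (PZ * A * PZ) ⊗ₖ B := by
  rw [← mul_kronecker_mul, ← mul_kronecker_mul, one_mul, mul_one]

theorem ZI_conj_Rxy : (PZ ⊗ₖ 1) * Rxy * (PZ ⊗ₖ 1) = -Rxy := by
  rw [Rxy, mul_smul_comm, smul_mul_assoc, mul_add, add_mul, ZI_conj_kronecker, ZI_conj_kronecker,
    PZ_mul_PX, PZ_mul_PY, neg_mul, neg_mul, mul_assoc, mul_assoc, PZ_mul_PZ, mul_one, mul_one,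
    neg_kronecker, neg_kronecker, ← neg_add, smul_neg]

theorem ZI_conj_Rzz : (PZ ⊗ₖ 1) * Rzz * (PZ ⊗ₖ 1) = Rzz := by
  rw [Rzz, mul_smul_comm, smul_mul_assoc, ZI_conj_kronecker, PZ_mul_PZ, one_mul]

/-- **`(Z⊗I) exp(−iα R_Heis) (Z⊗I) exp(iα R_Heis) = exp(2iα R)`** for every real `α`. -/
theorem Z_conj_exp_Heis_eq_exp_XY (α : ℝ) :
    (PZ ⊗ₖ (1 : Matrix (Fin 2) (Fin 2) ℂ)) * mexp ((-(Complex.I * α)) • RHeis)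
        * (PZ ⊗ₖ (1 : Matrix (Fin 2) (Fin 2) ℂ)) * mexp ((Complex.I * α) • RHeis)
      = mexp ((2 * Complex.I * α) • Rxy) := by
  set c : ℂ := Complex.I * α
  have hR : (PZ ⊗ₖ 1) * (c • Rxy) * (PZ ⊗ₖ 1) = -(c • Rxy) := by
    rw [mul_smul_comm, smul_mul_assoc, ZI_conj_Rxy, smul_neg]
  have hS : (PZ ⊗ₖ 1) * (c • Rzz) * (PZ ⊗ₖ 1) = c • Rzz := by
    rw [mul_smul_comm, smul_mul_assoc, ZI_conj_Rzz]
  have key := Matrix.conj_exp_neg_mul_exp_eq_exp_add_self ZI_mul_ZI hR hS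
    ((commute_Rxy_Rzz.smul_left c).smul_right c)
  have h2c : (2 * Complex.I * α) • Rxy = c • Rxy + c • Rxy := by module
  rw [mexp_eq_exp, mexp_eq_exp, mexp_eq_exp, RHeis_eq_Rxy_add_Rzz, neg_smul, smul_add, h2c, key]
end
end

section
/- Define T : N → N by T(1) = 1 and T(k) = 2T(⌊k/2⌋) + 2T(⌈k/2⌉) for k ≥ 2. Then for every k ≥ 1, T(k) ≤ (9k²−1)/8 if k is odd and T(k) ≤ (9k²−4)/8 if k is even. -/
/-- **Gate-count recursion bound.** If `T : ℕ → ℕ` satisfies `T 1 = 1` and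
`T k = 2·T(⌊k/2⌋) + 2·T(⌈k/2⌉)` for `k ≥ 2`, then for every `k ≥ 1`:
`8·T k ≤ 9k² − 1` when `k` is odd, and `8·T k ≤ 9k² − 4` when `k` is even. -/
theorem gate_count_recursion_bound (T : ℕ → ℕ)
    (h1 : T 1 = 1)
    (hrec : ∀ k, 2 ≤ k → T k = 2 * T (k / 2) + 2 * T ((k + 1) / 2)) :
    ∀ k, 1 ≤ k →
      (Odd k → 8 * T k ≤ 9 * k ^ 2 - 1) ∧
      (Even k → 8 * T k ≤ 9 * k ^ 2 - 4) := by
  intro k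
  induction k using Nat.strong_induction_on with
  | _ k ih =>
    intro hk
    constructor
    · rintro ⟨m, rfl⟩
      rcases Nat.eq_zero_or_pos m with rfl | hm
      · simp [h1]
      · have hr := hrec (2 * m + 1) (by omega)
        have hd1 : (2 * m + 1) / 2 = m := by omega
        have hd2 : (2 * m + 1 + 1) / 2 = m + 1 := by omega
        rw [hd1, hd2] at hr
        have ihm := ih m (by omega) hm
        have ihm1 := ih (m + 1) (by omega) (by omega)
        have key : 8 * T m + 8 * T (m + 1) ≤ 18 * m ^ 2 + 18 * m + 4 := by
          rcases Nat.even_or_odd m with he | ho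
          · have a1 := ihm.2 he
            have a2 := ihm1.1 (by exact he.add_one)
            have e1 : 9 * (m + 1) ^ 2 = 9 * m ^ 2 + 18 * m + 9 := by ring
            have e0 : 4 ≤ 9 * m ^ 2 := by nlinarith
            omega
          · have a1 := ihm.1 ho
            have a2 := ihm1.2 (by simpa using ho.add_one)
            have e1 : 9 * (m + 1) ^ 2 = 9 * m ^ 2 + 18 * m + 9 := by ring
            have e0 : 1 ≤ 9 * m ^ 2 := by nlinarith
            omega
        have e2 : 9 * (2 * m + 1) ^ 2 = 36 * m ^ 2 + 36 * m + 9 := by ring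
        omega
    · rintro ⟨m, rfl⟩
      have hm : 1 ≤ m := by omega
      have hr := hrec (m + m) (by omega)
      have hd1 : (m + m) / 2 = m := by omega
      have hd2 : (m + m + 1) / 2 = m := by omega
      rw [hd1, hd2] at hr
      have ihm := ih m (by omega) hm
      have key : 8 * T m ≤ 9 * m ^ 2 - 1 := by
        rcases Nat.even_or_odd m with he | ho
        · have := ihm.2 he
          omega
        · exact ihm.1 ho
      have e0 : 1 ≤ 9 * m ^ 2 := by nlinarith
      have e2 : 9 * (m + m) ^ 2 = 36 * m ^ 2 := by ring
      omega
end

section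
/- Let θ be a real number with cos(θ/2) = cos²(π/8) = (1 + 1/√2)/2. Then θ/π is irrational. -/
open Complex Polynomial

lemma aux_cos (θ : ℝ) (h : Real.cos (θ / 2) = (1 + (Real.sqrt 2)⁻¹) / 2) :
    Real.cos θ = Real.sqrt 2 / 2 - 1 / 4 := by
  have h2 : Real.cos (2 * (θ / 2)) = 2 * Real.cos (θ / 2) ^ 2 - 1 := Real.cos_two_mul _
  have hs : Real.sqrt 2 * Real.sqrt 2 = 2 := Real.mul_self_sqrt (by norm_num)
  have hpos : (0:ℝ) < Real.sqrt 2 := Real.sqrt_pos.mpr (by norm_num)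
  rw [show 2 * (θ / 2) = θ by ring, h] at h2
  rw [h2]
  field_simp
  nlinarith [hs, hpos]

/-- **The rotation angle of `√iSWAP₂₃·√iSWAP₁₃` is an irrational multiple of `π`.**
If `cos(θ/2) = cos²(π/8) = (1 + 1/√2)/2`, then `θ/π` is irrational. -/
theorem theta_div_pi_irrational (θ : ℝ)
    (h : Real.cos (θ / 2) = (1 + (Real.sqrt 2)⁻¹) / 2) :
    Irrational (θ / Real.pi) := by
  have hcos := aux_cos θ h
  by_contra hirr
  obtain ⟨q, hq⟩ := not_not.mp hirr
  have hpi : Real.pi ≠ 0 := Real.pi_ne_zero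
  have hθ : θ = (q : ℝ) * Real.pi := by
    field_simp at hq
    linarith [hq]
  -- z = exp(θ i) is a root of unity
  set z : ℂ := Complex.exp (θ * Complex.I) with hz_def
  set n : ℕ := 2 * q.den with hn_def
  have hn0 : n ≠ 0 := by positivity
  have hzn : z ^ n = 1 := by
    rw [hz_def, ← Complex.exp_nat_mul]
    have : (n : ℂ) * (θ * Complex.I) = (q.num : ℤ) * (2 * Real.pi * Complex.I) := by
      have hqden : (q : ℝ) * (q.den : ℝ) = (q.num : ℝ) := by
        exact_mod_cast congrArg (fun r : ℚ => (r : ℝ)) (Rat.mul_den_eq_num q)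
      have hreal : (n : ℝ) * θ = (q.num : ℝ) * (2 * Real.pi) := by
        rw [hθ, hn_def]; push_cast; linear_combination 2 * Real.pi * hqden
      have hc := congrArg (fun r : ℝ => (r : ℂ)) hreal
      push_cast at hc
      linear_combination Complex.I * hc
    rw [this, Complex.exp_int_mul_two_pi_mul_I]
  have hz0 : z ≠ 0 := Complex.exp_ne_zero _
  have hzint : IsIntegral ℤ z := by
    refine ⟨Polynomial.X ^ n - Polynomial.C 1, Polynomial.monic_X_pow_sub_C 1 hn0, ?_⟩
    simp [hzn]
  have hzinv : IsIntegral ℤ z⁻¹ := by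
    have : z⁻¹ = z ^ (n - 1) := by
      have : z * z ^ (n - 1) = 1 := by
        rw [← pow_succ', Nat.sub_add_cancel (Nat.one_le_iff_ne_zero.mpr hn0)]
        exact hzn
      field_simp
      linear_combination -this
    rw [this]
    exact hzint.pow _
  have ht : z + z⁻¹ = ((2 * Real.cos θ : ℝ) : ℂ) := by
    have h2c := Complex.two_cos (θ : ℂ)
    rw [neg_mul] at h2c
    rw [hz_def, ← Complex.exp_neg, ← h2c, Complex.ofReal_mul, Complex.ofReal_cos,
      Complex.ofReal_ofNat]
  have htint : IsIntegral ℤ ((2 * Real.cos θ : ℝ) : ℂ) := ht ▸ hzint.add hzinv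
  have hval : ((2 * Real.cos θ : ℝ) : ℂ) ^ 2 + ((2 * Real.cos θ : ℝ) : ℂ)
      = algebraMap ℚ ℂ (7/4) := by
    have hs : Real.sqrt 2 * Real.sqrt 2 = 2 := Real.mul_self_sqrt (by norm_num)
    have : (2 * Real.cos θ) ^ 2 + 2 * Real.cos θ = 7/4 := by
      rw [hcos]; nlinarith [hs]
    rw [show (algebraMap ℚ ℂ) (7/4) = ((7/4 : ℝ) : ℂ) by norm_num]
    rw [← Complex.ofReal_pow, ← Complex.ofReal_add, this]
  have h74 : IsIntegral ℤ (algebraMap ℚ ℂ (7/4 : ℚ)) := by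
    rw [← hval]
    exact (htint.pow 2).add htint
  have h74q : IsIntegral ℤ ((7:ℚ)/4) :=
    (isIntegral_algebraMap_iff (algebraMap ℚ ℂ).injective).mp h74
  obtain ⟨y, hy⟩ := IsIntegrallyClosed.isIntegral_iff.mp h74q
  have : (y : ℚ) = 7/4 := by exact_mod_cast hy
  have h4 : (4 : ℚ) * y = 7 := by rw [this]; ring
  have : (4 : ℤ) * y = 7 := by exact_mod_cast h4
  omega
end

section
/- Suppose V is an energy-conserving unitary on n qubits (V = ⊕_m V^(m) over Hamming-weight sectors), and define V' on n+1 qubits by V' = V ⊗ |0⟩⟨0| + (X^{⊗n} V X^{⊗n}) ⊗ |1⟩⟨1| (the last factor acting on the ancilla qubit). Then: (a) V'(|ψ⟩⊗|0⟩) = (V|ψ⟩)⊗|0⟩ for all |ψ⟩; (b) X^{⊗(n+1)} V' X^{⊗(n+1)} = V'; (c) V' commutes with Σ_{j=1}^{n+1} Z_j; and (d) det(V'^(m)) = det(V^(m))·det(V^(n+1−m)) for every Hamming-weight-m sector of the (n+1)-qubit space. -/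
open Matrix
open scoped BigOperators

noncomputable section

/-- Computational basis states of `n` qubits: bit strings of length `n`. -/
abbrev QState (n : ℕ) := Fin n → Fin 2

/-- Matrices on the `n`-qubit Hilbert space `(ℂ²)^⊗n`, written in the computational basis. -/
abbrev QMat (n : ℕ) := Matrix (QState n) (QState n) ℂ

/-- Hamming weight of a bit string. -/
def hamWeight {n : ℕ} (b : QState n) : ℕ := ∑ j, (b j : ℕ)

/-- Bitwise negation of a bit string. -/
def bflip {n : ℕ} (b : QState n) : QState n := fun j => b j + 1

/-- The operator `X^{⊗n}` flipping all qubits. -/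
def XallMat (n : ℕ) : QMat n := fun b b' => if b' = bflip b then 1 else 0

/-- The projector `Π^(m)` onto the span of computational basis states of Hamming weight `m`. -/
def ProjW (n m : ℕ) : QMat n :=
  Matrix.diagonal (fun b => if hamWeight b = m then 1 else 0)

/-- The eigenvalue `±1` of Pauli `Z` on a single-qubit basis label. -/
def zval : Fin 2 → ℂ := fun x => if x = 0 then 1 else -1

/-- Pauli `Z` acting on qubit `j` (tensored with identity elsewhere). -/
def Zmat (n : ℕ) (j : Fin n) : QMat n := Matrix.diagonal (fun b => zval (b j))

/-- The total Hamiltonian `Σ_j Z_j`. -/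
def sumZ (n : ℕ) : QMat n := ∑ j, Zmat n j

/-- The XY interaction `R_{ij} = (X_i X_j + Y_i Y_j)/2 = |01⟩⟨10| + |10⟩⟨01|` on
qubits `i, j`, tensored with identity elsewhere. -/
def Rmat (n : ℕ) (i j : Fin n) : QMat n := fun b b' =>
  if b i ≠ b j ∧ b' i = b j ∧ b' j = b i ∧ (∀ k, k ≠ i → k ≠ j → b' k = b k) then 1 else 0

/-- The determinant of (the block of) `A` on the range of a projector `P`,
computed as `det (P A P + (1 − P))`. -/
def sectorDet {ι : Type*} [Fintype ι] [DecidableEq ι] (P A : Matrix ι ι ℂ) : ℂ :=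
  (P * A * P + (1 - P)).det


/-- The `(n+1)`-qubit extension `V' = V ⊗ |0⟩⟨0| + (X^{⊗n} V X^{⊗n}) ⊗ |1⟩⟨1|`,
where the last tensor factor is the ancilla qubit. -/
def Vext (n : ℕ) (V : QMat n) : Matrix (QState n × Fin 2) (QState n × Fin 2) ℂ :=
  fun p q =>
    if p.2 = 0 ∧ q.2 = 0 then V p.1 q.1
    else if p.2 = 1 ∧ q.2 = 1 then (XallMat n * V * XallMat n) p.1 q.1
    else 0

/-- `X^{⊗(n+1)}` on the extended system (system qubits plus ancilla). -/
def XextMat (n : ℕ) : Matrix (QState n × Fin 2) (QState n × Fin 2) ℂ :=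
  fun p q => if q.1 = bflip p.1 ∧ q.2 = p.2 + 1 then 1 else 0

/-- `Σ_{j=1}^{n+1} Z_j` on the extended system. -/
def sumZext (n : ℕ) : Matrix (QState n × Fin 2) (QState n × Fin 2) ℂ :=
  Matrix.diagonal (fun p => (∑ j, zval (p.1 j)) + zval p.2)

/-- The projector onto Hamming-weight-`m` states of the extended `(n+1)`-qubit system. -/
def ProjWext (n m : ℕ) : Matrix (QState n × Fin 2) (QState n × Fin 2) ℂ :=
  Matrix.diagonal (fun p => if hamWeight p.1 + (p.2 : ℕ) = m then 1 else 0)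


section AncillaAux

lemma bflip_bflip {n : ℕ} : Function.Involutive (bflip (n := n)) := by
  intro b; funext j
  simp only [bflip]
  have : ∀ x : Fin 2, x + 1 + 1 = x := by decide
  exact this (b j)

lemma hamWeight_le {n : ℕ} (b : QState n) : hamWeight b ≤ n := by
  calc hamWeight b ≤ ∑ _j : Fin n, 1 := Finset.sum_le_sum fun j _ => Nat.lt_succ_iff.mp (b j).2
    _ = n := by simp

lemma hamWeight_bflip {n : ℕ} (b : QState n) : hamWeight (bflip b) = n - hamWeight b := by
  have h : hamWeight (bflip b) + hamWeight b = n := by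
    have : ∀ x : Fin 2, ((x + 1 : Fin 2) : ℕ) + (x : ℕ) = 1 := by decide
    simp only [hamWeight, bflip, ← Finset.sum_add_distrib]
    simp [this]
  omega

lemma zval_flip (x : Fin 2) : zval (x + 1) = - zval x := by
  fin_cases x <;> simp [zval]

lemma sum_zval_bflip {n : ℕ} (b : QState n) :
    (∑ j, zval (bflip b j)) = -∑ j, zval (b j) := by
  simp [bflip, zval_flip]

lemma XallMat_mul {n : ℕ} (A : QMat n) (b c : QState n) :
    (XallMat n * A) b c = A (bflip b) c := by
  simp [Matrix.mul_apply, XallMat, ite_mul]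

lemma mul_XallMat {n : ℕ} (A : QMat n) (b c : QState n) :
    (A * XallMat n) b c = A b (bflip c) := by
  have : ∀ a : QState n, (c = bflip a) = (a = bflip c) := by
    intro a
    simp only [eq_iff_iff]
    constructor <;> intro h <;> simp [h, bflip_bflip c, bflip_bflip a]
  simp [Matrix.mul_apply, XallMat, mul_ite, this]

lemma XVX_apply {n : ℕ} (V : QMat n) (b c : QState n) :
    (XallMat n * V * XallMat n) b c = V (bflip b) (bflip c) := by
  rw [mul_XallMat, XallMat_mul]

lemma sumZ_eq (n : ℕ) : sumZ n = Matrix.diagonal (fun b => ∑ j, zval (b j)) := by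
  ext b c
  by_cases h : b = c <;> simp [sumZ, Zmat, Matrix.sum_apply, Matrix.diagonal_apply, h]

end AncillaAux

/-- **Properties of the ancilla-assisted extension.** For an energy-conserving unitary
`V` on `n` qubits, the extension `V' = V ⊗ |0⟩⟨0| + (X^{⊗n} V X^{⊗n}) ⊗ |1⟩⟨1|` satisfies:
(a) `V'(|ψ⟩⊗|0⟩) = (V|ψ⟩)⊗|0⟩` for all `ψ`;
(b) `X^{⊗(n+1)} V' X^{⊗(n+1)} = V'`;
(c) `V'` commutes with `Σ_{j=1}^{n+1} Z_j`;
(d) `det(V'^(m)) = det(V^(m))·det(V^(n+1−m))` for every Hamming-weight sector `m` of the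
`(n+1)`-qubit space (sector determinants computed via `sectorDet`). -/
theorem ancilla_extension_properties (n : ℕ) (V : QMat n)
    (hV : V ∈ Matrix.unitaryGroup (QState n) ℂ)
    (hVZ : V * sumZ n = sumZ n * V) :
    (∀ ψ : QState n → ℂ,
      (Vext n V).mulVec (fun p => if p.2 = 0 then ψ p.1 else 0)
        = fun p => if p.2 = 0 then V.mulVec ψ p.1 else 0) ∧
    (XextMat n * Vext n V * XextMat n = Vext n V) ∧
    (Vext n V * sumZext n = sumZext n * Vext n V) ∧
    (∀ m : ℕ, m ≤ n + 1 →
      sectorDet (ProjWext n m) (Vext n V)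
        = sectorDet (ProjW n m) V * sectorDet (ProjW n (n + 1 - m)) V) := by
  refine ⟨?_, ?_, ?_, ?_⟩
  · -- (a)
    intro ψ
    funext p
    obtain ⟨b, s⟩ := p
    simp only [Matrix.mulVec, dotProduct, Fintype.sum_prod_type]
    fin_cases s <;> simp [Vext, Fin.sum_univ_two]
  · -- (b)
    have hl : ∀ (A : Matrix (QState n × Fin 2) (QState n × Fin 2) ℂ) p q,
        (XextMat n * A) p q = A (bflip p.1, p.2 + 1) q := by
      intro A p q
      have : ∀ r : QState n × Fin 2,
          (r.1 = bflip p.1 ∧ r.2 = p.2 + 1) = (r = (bflip p.1, p.2 + 1)) := by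
        intro r; simp [Prod.ext_iff]
      simp [Matrix.mul_apply, XextMat, ite_mul, this]
    have hr : ∀ (A : Matrix (QState n × Fin 2) (QState n × Fin 2) ℂ) p q,
        (A * XextMat n) p q = A p (bflip q.1, q.2 + 1) := by
      intro A p q
      have : ∀ r : QState n × Fin 2,
          (q.1 = bflip r.1 ∧ q.2 = r.2 + 1) = (r = (bflip q.1, q.2 + 1)) := by
        intro r
        have h1 : (q.1 = bflip r.1) ↔ (r.1 = bflip q.1) := by
          constructor <;> intro h <;> simp [h, bflip_bflip q.1, bflip_bflip r.1]
        have h2 : ∀ x y : Fin 2, (x = y + 1) ↔ (y = x + 1) := by decide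
        simp [Prod.ext_iff, h1, h2 q.2 r.2, and_comm]
      simp [Matrix.mul_apply, XextMat, mul_ite, this]
    ext ⟨b, s⟩ ⟨c, t⟩
    rw [hr, hl]
    fin_cases s <;> fin_cases t <;>
      simp [Vext, XVX_apply, bflip_bflip b, bflip_bflip c]
  · -- (c)
    have key : ∀ b c, V b c * (∑ j, zval (c j)) = (∑ j, zval (b j)) * V b c := by
      intro b c
      have := congrFun (congrFun hVZ b) c
      rwa [sumZ_eq, Matrix.mul_diagonal, Matrix.diagonal_mul] at this
    ext ⟨b, s⟩ ⟨c, t⟩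
    rw [sumZext, Matrix.mul_diagonal, Matrix.diagonal_mul]
    have z0 : zval 0 = 1 := by simp [zval]
    have z1 : zval 1 = -1 := by simp [zval]
    have key' : ∀ b c : QState n,
        V (bflip b) (bflip c) * (∑ j, zval (c j))
          = (∑ j, zval (b j)) * V (bflip b) (bflip c) := by
      intro b c
      have := key (bflip b) (bflip c)
      rw [sum_zval_bflip, sum_zval_bflip] at this
      linear_combination -this
    fin_cases s <;> fin_cases t <;>
      simp only [Vext, XVX_apply] <;> simp [z0, z1] <;>
      first
      | linear_combination key b c
      | linear_combination key' b c
  · -- (d)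
    intro m hm
    set Q : QMat n := Matrix.diagonal (fun b => if hamWeight b + 1 = m then 1 else 0) with hQ
    set M0 : QMat n := ProjW n m * V * ProjW n m + (1 - ProjW n m) with hM0
    set M1 : QMat n := Q * (XallMat n * V * XallMat n) * Q + (1 - Q) with hM1
    have hblock : ProjWext n m * Vext n V * ProjWext n m + (1 - ProjWext n m)
        = Matrix.blockDiagonal ![M0, M1] := by
      ext ⟨b, s⟩ ⟨c, t⟩
      simp only [ProjWext, Matrix.add_apply, Matrix.sub_apply, Matrix.one_apply,
        Matrix.diagonal_apply, Matrix.blockDiagonal_apply, hM0, hM1, hQ, ProjW, Vext,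
        Matrix.mul_diagonal, Matrix.diagonal_mul, Prod.mk.injEq]
      fin_cases s <;> fin_cases t <;>
        simp [Matrix.mul_diagonal, Matrix.diagonal_mul, Matrix.one_apply,
          Matrix.diagonal_apply, Prod.ext_iff]
    have hdet1 : M1.det = sectorDet (ProjW n (n + 1 - m)) V := by
      have hsub : M1 = (ProjW n (n + 1 - m) * V * ProjW n (n + 1 - m)
          + (1 - ProjW n (n + 1 - m))).submatrix bflip_bflip.toPerm bflip_bflip.toPerm := by
        ext b c
        have hb := hamWeight_le b
        have hc := hamWeight_le c
        have ib : (hamWeight (bflip b) = n + 1 - m) = (hamWeight b + 1 = m) := by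
          rw [hamWeight_bflip]; simp only [eq_iff_iff]; omega
        have ic : (hamWeight (bflip c) = n + 1 - m) = (hamWeight c + 1 = m) := by
          rw [hamWeight_bflip]; simp only [eq_iff_iff]; omega
        simp only [hM1, hQ, ProjW, Matrix.submatrix_apply, Function.Involutive.coe_toPerm,
          Matrix.add_apply, Matrix.sub_apply, Matrix.one_apply, Matrix.diagonal_apply,
          Matrix.mul_diagonal, Matrix.diagonal_mul, XVX_apply, ib, ic,
          bflip_bflip.injective.eq_iff]
      rw [hsub, Matrix.det_submatrix_equiv_self, sectorDet]
    rw [sectorDet, hblock, Matrix.det_blockDiagonal, Fin.prod_univ_two]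
    simp only [Matrix.cons_val_zero, Matrix.cons_val_one, Matrix.head_cons]
    rw [hdet1]
    rfl


end
end
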